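/- Let p ∈ S be a klt surface singularity with n exceptional components E₁, …, Eₙ in its minimal resolution, with coefficients e₁, …, eₙ, and suppose the coefficient e(p) = max eᵢ satisfies e(p) < 3/5. Then n ≥ Σᵢ eᵢ(−2 − Eᵢ²), with equality if and only if p is the cyclic singularity of type (4) (a single (−4)-curve). -/

import Mathlib

/-!
Write `dᵢ = −Eᵢ²` and let `Rᵢ = Σ_{j ≠ i} eⱼ Eⱼ·Eᵢ ≥ 0`, so that the defining equations read
`eᵢ dᵢ = dᵢ − 2 + Rᵢ`. Hence `eᵢ < 3/5` forces `dᵢ ≤ 4`, and each summand `eᵢ(dᵢ − 2)` is below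
`3/5` unless `dᵢ = 4`, where it is below `6/5`. A `(−4)`-curve has `eᵢ ≥ 1/2`, so its neighbours
have `eⱼ < 2/5`; in particular they are not `(−4)`-curves, and none of them meets two `(−4)`-curves
(that would give `Rⱼ ≥ 1`, hence `eⱼ ≥ 1/2`). If `n ≥ 2`, sending every `(−4)`-curve to a
neighbour is therefore an injection into the other curves, so at most `n/2` curves are `(−4)`-curves
and the sum is at most `(3/5)(n + n/2) < n`. If `n = 1` then `R = 0` and the sum is
`(d − 2)²/d ≤ 1`, with equality exactly for `d = 4`.
-/

/-- Abstract model of a klt surface singularity `p ∈ S`: the intersection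
matrix of the `n` exceptional curves `E₁, …, Eₙ` of its minimal resolution
(each `Eᵢ` a smooth rational curve with `Eᵢ² ≤ −2`, pairwise intersections
`0` or `1`, connected dual graph) together with the coefficients
`e₁, …, eₙ` defined by `K_{S̃} + Σ eᵢEᵢ = π*K_S`. -/
structure KltSingularityGerm where
  /-- the number of exceptional components -/
  n : ℕ
  /-- the intersection matrix `Eᵢ·Eⱼ` of the exceptional curves -/
  mat : Fin n → Fin n → ℤ
  mat_symm : ∀ i j, mat i j = mat j i
  /-- the resolution is minimal: `Eᵢ² ≤ −2` -/
  diag_le : ∀ i, mat i i ≤ -2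
  offdiag : ∀ i j, i ≠ j → mat i j = 0 ∨ mat i j = 1
  /-- the dual graph is connected -/
  connected : (SimpleGraph.fromRel fun i j => mat i j = 1).Connected
  /-- the coefficients `eᵢ` of the exceptional curves -/
  e : Fin n → ℝ
  e_nonneg : ∀ i, 0 ≤ e i
  /-- the singularity is klt -/
  e_lt_one : ∀ i, e i < 1
  /-- the defining equations `(K_{S̃} + Σⱼ eⱼEⱼ)·Eᵢ = 0`, using adjunction
  `K_{S̃}·Eᵢ = −2 − Eᵢ²` -/
  coeff_eq : ∀ i, (-2 - (mat i i : ℝ)) + ∑ j, e j * (mat j i : ℝ) = 0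

open Finset

namespace KltSingularityGerm

variable (G : KltSingularityGerm)

def neighborSum (i : Fin G.n) : ℝ :=
  ∑ j ∈ univ.erase i, G.e j * (G.mat j i : ℝ)

variable {G}

lemma ne_of_mat_eq_one {i j : Fin G.n} (h : G.mat j i = 1) : j ≠ i := by
  rintro rfl
  have := G.diag_le j
  omega

lemma coeff_eq_neighborSum (i : Fin G.n) :
    (-2 - (G.mat i i : ℝ)) + G.e i * (G.mat i i : ℝ) + G.neighborSum i = 0 := by
  rw [← G.coeff_eq i, ← add_sum_erase _ _ (mem_univ i), neighborSum, add_assoc]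

lemma e_mul_mat_nonneg {i j : Fin G.n} (h : j ≠ i) : 0 ≤ G.e j * (G.mat j i : ℝ) := by
  rcases G.offdiag j i h with h | h <;> simp [h, G.e_nonneg j]

lemma neighborSum_nonneg (i : Fin G.n) : 0 ≤ G.neighborSum i :=
  sum_nonneg fun _ hj => e_mul_mat_nonneg (ne_of_mem_erase hj)

lemma sum_e_le_neighborSum {i : Fin G.n} {s : Finset (Fin G.n)} (hs : ∀ j ∈ s, G.mat j i = 1) :
    ∑ j ∈ s, G.e j ≤ G.neighborSum i := by
  calc ∑ j ∈ s, G.e j = ∑ j ∈ s, G.e j * (G.mat j i : ℝ) :=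
        sum_congr rfl fun j hj => by simp [hs j hj]
    _ ≤ G.neighborSum i :=
        sum_le_sum_of_subset_of_nonneg
          (fun j hj => mem_erase.2 ⟨ne_of_mat_eq_one (hs j hj), mem_univ j⟩)
          fun _ hj _ => e_mul_mat_nonneg (ne_of_mem_erase hj)

lemma e_le_neighborSum {i j : Fin G.n} (h : G.mat j i = 1) : G.e j ≤ G.neighborSum i := by
  simpa using sum_e_le_neighborSum (s := {j}) (by simpa using h)

lemma neg_four_le_mat_self {i : Fin G.n} (hi : G.e i < 3 / 5) : -4 ≤ G.mat i i := by
  by_contra! hlt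
  have hle : (G.mat i i : ℝ) ≤ -5 := by exact_mod_cast (show G.mat i i ≤ -5 by omega)
  have := G.coeff_eq_neighborSum i
  have := G.neighborSum_nonneg i
  nlinarith [mul_pos (sub_pos.2 hi) (neg_pos.2 (hle.trans_lt (by norm_num)))]

lemma half_le_e_of_one_le_neighborSum {i : Fin G.n} (h : 1 ≤ G.neighborSum i) : 1 / 2 ≤ G.e i := by
  have hle : (G.mat i i : ℝ) ≤ -2 := by exact_mod_cast G.diag_le i
  have := G.coeff_eq_neighborSum i
  nlinarith

lemma half_le_e_of_mat_self_eq_neg_four {i : Fin G.n} (hi : G.mat i i = -4) : 1 / 2 ≤ G.e i := by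
  have h := G.coeff_eq_neighborSum i
  rw [hi] at h
  push_cast at h
  linarith [G.neighborSum_nonneg i]

lemma e_lt_two_fifths_of_mat_eq_one {i j : Fin G.n} (hi : G.mat i i = -4) (hsmall : G.e i < 3 / 5)
    (hji : G.mat j i = 1) : G.e j < 2 / 5 := by
  have h := G.coeff_eq_neighborSum i
  rw [hi] at h
  push_cast at h
  linarith [e_le_neighborSum hji]

lemma mat_self_ne_neg_four_of_mat_eq_one {i j : Fin G.n} (hi : G.mat i i = -4)
    (hsmall : G.e i < 3 / 5) (hji : G.mat j i = 1) : G.mat j j ≠ -4 := fun hj =>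
  (half_le_e_of_mat_self_eq_neg_four hj).not_gt
    ((e_lt_two_fifths_of_mat_eq_one hi hsmall hji).trans (by norm_num))

lemma eq_of_mat_eq_one_of_mat_self_eq_neg_four {i₁ i₂ j : Fin G.n} (hi₁ : G.mat i₁ i₁ = -4)
    (hi₂ : G.mat i₂ i₂ = -4) (hsmall : G.e i₁ < 3 / 5) (h₁ : G.mat j i₁ = 1)
    (h₂ : G.mat j i₂ = 1) : i₁ = i₂ := by
  by_contra hne
  have hpair : G.e i₁ + G.e i₂ ≤ G.neighborSum j := by
    simpa [sum_pair hne] using sum_e_le_neighborSum (s := {i₁, i₂}) (by simp [G.mat_symm _ j, h₁, h₂])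
  have hj := half_le_e_of_one_le_neighborSum
    (by linarith [half_le_e_of_mat_self_eq_neg_four hi₁, half_le_e_of_mat_self_eq_neg_four hi₂])
  have := e_lt_two_fifths_of_mat_eq_one hi₁ hsmall h₁
  linarith

lemma exists_mat_eq_one [Nontrivial (Fin G.n)] (i : Fin G.n) : ∃ j, G.mat j i = 1 := by
  obtain ⟨j, -, hij | hji⟩ := G.connected.preconnected.exists_adj_of_nontrivial i
  · exact ⟨j, G.mat_symm j i ▸ hij⟩
  · exact ⟨j, hji⟩

lemma two_mul_card_filter_mat_self_eq_neg_four_le [Nontrivial (Fin G.n)]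
    (hsmall : ∀ i, G.e i < 3 / 5) : 2 * #{i | G.mat i i = -4} ≤ G.n := by
  choose f hf using G.exists_mat_eq_one
  have hcard : #{i | G.mat i i = -4} ≤ #{i | ¬G.mat i i = -4} :=
    card_le_card_of_injOn f
      (fun i hi => by
        simp only [coe_filter, mem_univ, true_and] at hi ⊢
        exact mat_self_ne_neg_four_of_mat_eq_one hi (hsmall i) (hf i))
      (fun i₁ hi₁ i₂ hi₂ heq => by
        simp only [coe_filter, mem_univ, true_and] at hi₁ hi₂
        exact eq_of_mat_eq_one_of_mat_self_eq_neg_four hi₁ hi₂ (hsmall i₁) (hf i₁) (heq ▸ hf i₂))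
  have := card_filter_add_card_filter_not (s := univ) (fun i : Fin G.n => G.mat i i = -4)
  simp only [card_univ, Fintype.card_fin] at this
  omega

lemma e_mul_neg_two_sub_mat_self_le {i : Fin G.n} (hi : G.e i < 3 / 5) :
    G.e i * (-2 - (G.mat i i : ℝ)) ≤ 3 / 5 * (1 + if G.mat i i = -4 then 1 else 0) := by
  have hlo := neg_four_le_mat_self hi
  have hhi : (G.mat i i : ℝ) ≤ -2 := by exact_mod_cast G.diag_le i
  have hd : -2 - (G.mat i i : ℝ) ≤ 1 + if G.mat i i = -4 then 1 else 0 := by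
    split_ifs with h
    · rw [h]; norm_num
    · have : (-3 : ℝ) ≤ G.mat i i := by exact_mod_cast (show -3 ≤ G.mat i i by omega)
      linarith
  calc G.e i * (-2 - (G.mat i i : ℝ)) ≤ 3 / 5 * (-2 - (G.mat i i : ℝ)) :=
        mul_le_mul_of_nonneg_right hi.le (by linarith)
    _ ≤ 3 / 5 * (1 + if G.mat i i = -4 then 1 else 0) := by gcongr

lemma sum_e_mul_neg_two_sub_mat_self_lt [Nontrivial (Fin G.n)] (hsmall : ∀ i, G.e i < 3 / 5) :
    ∑ i, G.e i * (-2 - (G.mat i i : ℝ)) < G.n := by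
  have hP : 2 * (#{i | G.mat i i = -4} : ℝ) ≤ G.n := by
    exact_mod_cast two_mul_card_filter_mat_self_eq_neg_four_le hsmall
  have hn : (0 : ℝ) < G.n := by exact_mod_cast Fin.pos_iff_nonempty.2 inferInstance
  calc ∑ i, G.e i * (-2 - (G.mat i i : ℝ))
      ≤ ∑ i, 3 / 5 * (1 + if G.mat i i = -4 then (1 : ℝ) else 0) :=
        sum_le_sum fun i _ => e_mul_neg_two_sub_mat_self_le (hsmall i)
    _ = 3 / 5 * (G.n + #{i | G.mat i i = -4}) := by
        simp [← mul_sum, sum_add_distrib, sum_boole]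
    _ < G.n := by linarith

lemma neighborSum_eq_zero [Subsingleton (Fin G.n)] (i : Fin G.n) : G.neighborSum i = 0 :=
  sum_eq_zero fun j hj => absurd (Subsingleton.elim j i) (ne_of_mem_erase hj)

lemma e_mul_neg_two_sub_mat_self_le_one {i : Fin G.n} (hR : G.neighborSum i = 0)
    (hi : -4 ≤ G.mat i i) :
    G.e i * (-2 - (G.mat i i : ℝ)) ≤ 1 ∧ (G.e i * (-2 - (G.mat i i : ℝ)) = 1 ↔ G.mat i i = -4) := by
  have hcoeff := G.coeff_eq_neighborSum i
  rw [hR] at hcoeff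
  have hlo : (-4 : ℝ) ≤ G.mat i i := by exact_mod_cast hi
  have hhi : (G.mat i i : ℝ) ≤ -2 := by exact_mod_cast G.diag_le i
  have hsq : (G.e i * (-2 - (G.mat i i : ℝ)) - 1) * -(G.mat i i : ℝ)
      = ((G.mat i i : ℝ) + 1) * ((G.mat i i : ℝ) + 4) := by
    linear_combination ((G.mat i i : ℝ) + 2) * hcoeff
  refine ⟨by nlinarith, fun h => ?_, fun h => ?_⟩
  · rw [h, sub_self, zero_mul, eq_comm, mul_eq_zero] at hsq
    have : (G.mat i i : ℝ) = -4 := by linarith [hsq.resolve_left (by linarith)]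
    exact_mod_cast this
  · rw [h] at hcoeff ⊢
    push_cast at hcoeff ⊢
    linarith

end KltSingularityGerm

theorem klt_germ_component_bound_general (G : KltSingularityGerm)
    (hsmall : ∀ i, G.e i < 3 / 5) :
    (∑ i, G.e i * (-2 - (G.mat i i : ℝ))) ≤ (G.n : ℝ) ∧
    ((∑ i, G.e i * (-2 - (G.mat i i : ℝ))) = (G.n : ℝ) ↔
      G.n = 1 ∧ ∀ i, G.mat i i = -4) := by
  open KltSingularityGerm in
  have hpos : 0 < G.n := Fin.pos_iff_nonempty.2 G.connected.nonempty
  obtain hn | hn : G.n = 1 ∨ 2 ≤ G.n := by omega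
  · have : Subsingleton (Fin G.n) := Fin.subsingleton_iff_le_one.2 hn.le
    let i : Fin G.n := ⟨0, hpos⟩
    obtain ⟨hle, heq⟩ :=
      e_mul_neg_two_sub_mat_self_le_one (G.neighborSum_eq_zero i) (neg_four_le_mat_self (hsmall i))
    rw [Fintype.sum_subsingleton _ i, show (G.n : ℝ) = 1 by exact_mod_cast hn]
    exact ⟨hle, heq.trans ⟨fun h => ⟨hn, fun j => Subsingleton.elim i j ▸ h⟩, fun h => h.2 i⟩⟩
  · have : Nontrivial (Fin G.n) := Fin.nontrivial_iff_two_le.2 hn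
    have hlt := sum_e_mul_neg_two_sub_mat_self_lt hsmall
    exact ⟨hlt.le, iff_of_false hlt.ne fun h => by omega⟩

/-- for a klt singularity with coefficient `max eᵢ < 3/5` one has
`n ≥ Σ eᵢ(−2 − Eᵢ²)`, with equality if and only if the singularity is the
cyclic singularity of type `(4)`, i.e. a single `(−4)`-curve. -/
theorem klt_germ_component_bound (G : KltSingularityGerm)
    (hpos : 0 < G.n) (hsmall : ∀ i, G.e i < 3 / 5) :
    (∑ i, G.e i * (-2 - (G.mat i i : ℝ))) ≤ (G.n : ℝ) ∧
    ((∑ i, G.e i * (-2 - (G.mat i i : ℝ))) = (G.n : ℝ) ↔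
      G.n = 1 ∧ ∀ i, G.mat i i = -4) :=
  klt_germ_component_bound_general G hsmall
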